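/- arXiv:2412.03849 — 7 statements merged into one kernel-verified Lean document; each statement's English description precedes it below -/
import Mathlib

section
/- In the group G = ⟨a, b, c | aba = b, cbc = b, ac = ca⟩ (the TRAAG on a triangle with directed edges [a,b⟩, [c,b⟩ and undirected edge [a,c]), if G is torsion-free and the subgroup generated by a and c is free abelian of rank 2, then the subgroup generated by a, c, and b² is free abelian of rank 3. -/
/-! The Klein relations say that conjugation by `b` inverts `a` and `c`, so it inverts every
`a ^ m * c ^ n` while fixing `b ^ 2`; in particular `b ^ 2` is central in `⟨a, b, c⟩`.
If `a ^ m * c ^ n * b ^ (2k)` equals `a ^ m' * c ^ n' * b ^ (2k')`, comparing each side with its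
`b`-conjugate gives `a ^ (2m) * c ^ (2n) = a ^ (2m') * c ^ (2n')`, hence `m = m'` and `n = n'`
because `⟨a, c⟩ ≅ ℤ²`. What is left is `b ^ (2k) = b ^ (2k')`, and `b` has infinite order because
`b = 1` would force `a ^ 2 = 1`. -/

section KleinRelation

variable {G : Type*} [Group G] {a b : G}

theorem mul_eq_inv_mul_of_mul_mul_eq (h : a * b * a = b) : b * a = a⁻¹ * b :=
  eq_inv_mul_of_mul_eq ((mul_assoc a b a).symm.trans h)

theorem conj_zpow_eq_zpow_neg_of_mul_mul_eq (h : a * b * a = b) (m : ℤ) :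
    b * a ^ m * b⁻¹ = a ^ (-m) := by
  rw [← conj_zpow, mul_inv_eq_of_eq_mul (mul_eq_inv_mul_of_mul_mul_eq h), inv_zpow']

theorem commute_sq_of_mul_mul_eq (h : a * b * a = b) : Commute a (b ^ 2) :=
  calc a * b ^ 2 = a * b * b := by rw [sq, mul_assoc]
    _ = b * (a⁻¹ * b) := by rw [eq_mul_inv_of_mul_eq h, mul_assoc]
    _ = b ^ 2 * a := by rw [← mul_eq_inv_mul_of_mul_mul_eq h, sq, mul_assoc]

end KleinRelation

theorem zpow_mul_zpow_mul_mul_inv_zpow_neg {G : Type*} [Group G] {x y : G} (hxy : Commute x y)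
    (m n : ℤ) (z : G) :
    x ^ m * y ^ n * z * (x ^ (-m) * y ^ (-n) * z)⁻¹ = x ^ (2 * m) * y ^ (2 * n) :=
  calc x ^ m * y ^ n * z * (x ^ (-m) * y ^ (-n) * z)⁻¹ = x ^ m * (y ^ (2 * n) * x ^ m) := by
        rw [two_mul, zpow_add]; group
    _ = x ^ (2 * m) * y ^ (2 * n) := by
        rw [← (hxy.zpow_zpow m (2 * n)).eq, ← mul_assoc, ← zpow_add, ← two_mul]

/-- In the group `G = ⟨a, b, c | aba = b, cbc = b, ac = ca⟩` (the TRAAG on a triangle with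
directed edges `[a,b⟩`, `[c,b⟩` and undirected edge `[a,c]`), if `G` is torsion-free and
`⟨a,c⟩ ≅ ℤ²`, then `⟨a, c, b²⟩` is free abelian of rank 3. -/
theorem stmt_0 {G : Type*} [Group G] (hTF : ∀ g : G, g ≠ 1 → ¬IsOfFinOrder g)
    (a b c : G) (h1 : a * b * a = b) (h2 : c * b * c = b) (h3 : a * c = c * a)
    (hZ2 : Function.Injective fun v : ℤ × ℤ => a ^ v.1 * c ^ v.2) :
    Commute a (b ^ 2) ∧ Commute c (b ^ 2) ∧
      Function.Injective fun v : ℤ × ℤ × ℤ => a ^ v.1 * c ^ v.2.1 * (b ^ 2) ^ v.2.2 := by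
  refine ⟨commute_sq_of_mul_mul_eq h1, commute_sq_of_mul_mul_eq h2, ?_⟩
  have hconj (m n k : ℤ) :
      b * (a ^ m * c ^ n * (b ^ 2) ^ k) * b⁻¹ = a ^ (-m) * c ^ (-n) * (b ^ 2) ^ k := by
    rw [← conj_mul, ← conj_mul, conj_zpow_eq_zpow_neg_of_mul_mul_eq h1,
      conj_zpow_eq_zpow_neg_of_mul_mul_eq h2, ((Commute.refl b).pow_right 2).zpow_right k |>.eq,
      mul_inv_cancel_right]
  rintro ⟨m, n, k⟩ ⟨m', n', k'⟩ (h : a ^ m * c ^ n * (b ^ 2) ^ k = a ^ m' * c ^ n' * (b ^ 2) ^ k')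
  have hac : a ^ (2 * m) * c ^ (2 * n) = a ^ (2 * m') * c ^ (2 * n') := by
    rw [← zpow_mul_zpow_mul_mul_inv_zpow_neg h3, ← zpow_mul_zpow_mul_mul_inv_zpow_neg h3,
      ← hconj, ← hconj, h]
  obtain ⟨rfl, rfl⟩ : m = m' ∧ n = n' := by
    have := hZ2 (a₁ := (2 * m, 2 * n)) (a₂ := (2 * m', 2 * n')) hac
    simp only [Prod.mk.injEq] at this
    omega
  have hb : b ≠ 1 := by
    rintro rfl
    have : ((2 : ℤ), (0 : ℤ)) = (0, 0) := hZ2 (by simpa [sq] using h1)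
    simp at this
  have hk : b ^ (2 * k) = b ^ (2 * k') := by
    simpa only [zpow_mul, zpow_ofNat] using mul_left_cancel h
  have := injective_zpow_iff_not_isOfFinOrder.mpr (hTF b hb) hk
  simp only [Prod.mk.injEq, true_and]
  omega
end

section
/- Let G be a torsion-free group containing elements a, b, c with relations b⁻¹ab = a⁻¹ (i.e. aba = b is replaced by the Klein relation on the pair), c⁻¹bc = b⁻¹, and ac = ca, such that ⟨a,c⟩ ≅ ℤ². Then b² ∉ ⟨a,c⟩. -/
/-!
Since `a` and `c` commute, every element of `⟨a, c⟩` commutes with `c`. But conjugation by `c`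
inverts `b`, hence `b²`; so `b² ∈ ⟨a, c⟩` would force `b⁴ = 1`, i.e. `b = 1` by torsion-freeness.
Then `a^b = a⁻¹` says `a² = 1`, which `⟨a, c⟩ ≅ ℤ²` forbids.
-/

section

variable {G : Type*} [Group G]

lemma eq_one_of_pow_eq_one_of_forall_not_isOfFinOrder
    (hTF : ∀ g : G, g ≠ 1 → ¬IsOfFinOrder g) {x : G} {n : ℕ} (hn : n ≠ 0) (h : x ^ n = 1) :
    x = 1 := by
  by_contra hx
  exact hTF x hx (isOfFinOrder_iff_pow_eq_one.mpr ⟨n, Nat.pos_of_ne_zero hn, h⟩)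

lemma commute_of_mem_closure_pair {a c g : G} (hac : Commute a c)
    (hg : g ∈ Subgroup.closure ({a, c} : Set G)) : Commute g c := by
  have hle : Subgroup.closure ({a, c} : Set G) ≤ Subgroup.centralizer {c} := by
    rw [Subgroup.closure_le]
    rintro x (rfl | rfl) <;> simp [Subgroup.mem_centralizer_singleton_iff, hac.eq]
  exact Subgroup.mem_centralizer_singleton_iff.mp (hle hg)

lemma inv_mul_pow_mul {c x : G} (n : ℕ) : c⁻¹ * x ^ n * c = (c⁻¹ * x * c) ^ n := by
  simpa using (conj_pow (a := c⁻¹) (b := x) (i := n)).symm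

lemma sq_eq_one_of_commute_of_inv_mul_mul_eq_inv {c x : G} (hinv : c⁻¹ * x * c = x⁻¹)
    (hcomm : Commute x c) : x ^ 2 = 1 := by
  have hx : x = x⁻¹ := by rwa [mul_assoc, hcomm.eq, inv_mul_cancel_left] at hinv
  rw [sq, mul_eq_one_iff_eq_inv, ← hx]

end

/-- If a torsion-free group `G` contains `a, b, c` with `b⁻¹ab = a⁻¹`, `c⁻¹bc = b⁻¹`,
`ac = ca` and `⟨a,c⟩ ≅ ℤ²`, then `b² ∉ ⟨a,c⟩`. -/
theorem stmt_1 {G : Type*} [Group G] (hTF : ∀ g : G, g ≠ 1 → ¬IsOfFinOrder g)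
    (a b c : G) (h1 : b⁻¹ * a * b = a⁻¹) (h2 : c⁻¹ * b * c = b⁻¹) (h3 : a * c = c * a)
    (hZ2 : Function.Injective fun v : ℤ × ℤ => a ^ v.1 * c ^ v.2) :
    b ^ 2 ∉ Subgroup.closure ({a, c} : Set G) := by
  intro hmem
  have hb2 : (b ^ 2) ^ 2 = 1 :=
    sq_eq_one_of_commute_of_inv_mul_mul_eq_inv (by rw [inv_mul_pow_mul, h2, inv_pow])
      (commute_of_mem_closure_pair h3 hmem)
  have hb : b = 1 :=
    eq_one_of_pow_eq_one_of_forall_not_isOfFinOrder hTF (n := 4) (by norm_num)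
      (by rw [← hb2, ← pow_mul])
  have ha : a ^ 2 = 1 :=
    sq_eq_one_of_commute_of_inv_mul_mul_eq_inv h1 (by rw [hb]; exact Commute.one_right a)
  have : ((2 : ℤ), (0 : ℤ)) = (0, 0) := hZ2 (by simpa using ha)
  simp at this
end

section
/- Let G be a torsion-free group containing elements a, b, c with relations b⁻¹ab = a⁻¹, c⁻¹bc = b⁻¹, c⁻¹ac = a⁻¹, where ⟨a,b⟩ is a Klein bottle group (so b ∉ ⟨a⟩). Then b ∉ ⟨a, c²⟩ where ⟨a, c²⟩ ≅ ℤ² (a and c² commute). -/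
/-! Conjugation by `c` inverts `a` and fixes `c²`, so on `⟨a, c²⟩` it acts as `aⁱc²ʲ ↦ a⁻ⁱc²ʲ`.
Since `a` has infinite order and, by torsion-freeness, so does `c` (it cannot be trivial, as it
inverts `a`), an equation `aᵐ = c²ⁿ` conjugates to `a⁻ᵐ = c²ⁿ`, forcing `m = n = 0`; and if
`b = aⁱc²ʲ`, then `b⁻¹ = c⁻¹bc = a⁻ⁱc²ʲ` forces `c⁴ʲ = 1`, so `j = 0` and `b ∈ ⟨a⟩`. -/

/-- Old Mathlib definition (removed since): a monoid is torsion-free if every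
non-identity element has infinite order. -/
def Monoid.IsTorsionFree (G : Type*) [Monoid G] : Prop :=
  ∀ g : G, g ≠ 1 → ¬IsOfFinOrder g

section

variable {G : Type*} [Group G]

theorem injective_zpow_mul_zpow {a b : G} (h : ∀ m n : ℤ, a ^ m = b ^ n → m = 0 ∧ n = 0) :
    Function.Injective fun v : ℤ × ℤ => a ^ v.1 * b ^ v.2 := by
  rintro ⟨i, j⟩ ⟨k, l⟩ hv
  have hsub : a ^ (-k + i) = b ^ (l - j) := by
    have := congrArg (fun x => a ^ (-k) * x * b ^ (-j)) hv
    group at this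
    exact this
  obtain ⟨hm, hn⟩ := h _ _ hsub
  simp only [Prod.mk.injEq]
  omega

theorem exists_zpow_mul_zpow_eq_of_mem_closure_pair {a b x : G} (hab : Commute a b)
    (hx : x ∈ Subgroup.closure {a, b}) : ∃ m n : ℤ, a ^ m * b ^ n = x := by
  induction hx using Subgroup.closure_induction with
  | mem x hx =>
    rcases hx with rfl | rfl
    · exact ⟨1, 0, by simp⟩
    · exact ⟨0, 1, by simp⟩
  | one => exact ⟨0, 0, by simp⟩
  | mul x y _ _ hx hy =>
    obtain ⟨i, j, rfl⟩ := hx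
    obtain ⟨k, l, rfl⟩ := hy
    refine ⟨i + k, j + l, ?_⟩
    rw [zpow_add, zpow_add, mul_assoc, mul_assoc, ← mul_assoc (b ^ j), ← (hab.zpow_zpow k j).eq,
      mul_assoc]
  | inv x _ hx =>
    obtain ⟨i, j, rfl⟩ := hx
    refine ⟨-i, -j, ?_⟩
    rw [mul_inv_rev, zpow_neg, zpow_neg, ((hab.zpow_zpow i j).inv_inv).eq]

variable {a t : G}

theorem zpow_conj_of_conj_eq_inv (h : t⁻¹ * a * t = a⁻¹) (n : ℤ) :
    t⁻¹ * a ^ n * t = a ^ (-n) := by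
  simpa [h] using (conj_zpow (a := t⁻¹) (b := a) (i := n)).symm

theorem commute_sq_of_conj_eq_inv (h : t⁻¹ * a * t = a⁻¹) : Commute a (t ^ 2) := by
  have h_inv : t⁻¹ * a⁻¹ * t = a := by simpa using zpow_conj_of_conj_eq_inv h (-1)
  calc a * t ^ 2 = t * (t⁻¹ * a * t) * t := by rw [sq]; group
    _ = t ^ 2 * (t⁻¹ * a⁻¹ * t) := by rw [h]; group
    _ = t ^ 2 * a := by rw [h_inv]

theorem zpow_sq_conj (t : G) (n : ℤ) : t⁻¹ * (t ^ 2) ^ n * t = (t ^ 2) ^ n := by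
  rw [mul_assoc, ← ((Commute.self_pow t 2).zpow_right n).eq, inv_mul_cancel_left]

theorem zpow_mul_zpow_sq_conj (h : t⁻¹ * a * t = a⁻¹) (i j : ℤ) :
    t⁻¹ * (a ^ i * (t ^ 2) ^ j) * t = a ^ (-i) * (t ^ 2) ^ j := by
  calc t⁻¹ * (a ^ i * (t ^ 2) ^ j) * t = (t⁻¹ * a ^ i * t) * (t⁻¹ * (t ^ 2) ^ j * t) := by group
    _ = a ^ (-i) * (t ^ 2) ^ j := by rw [zpow_conj_of_conj_eq_inv h, zpow_sq_conj]

theorem ne_one_of_conj_eq_inv (h : t⁻¹ * a * t = a⁻¹) (ha : ¬IsOfFinOrder a) : t ≠ 1 := by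
  rintro rfl
  refine ha (isOfFinOrder_iff_zpow_eq_one.mpr ⟨2, two_ne_zero, ?_⟩)
  simp only [inv_one, one_mul, mul_one] at h
  rw [zpow_two]
  nth_rewrite 1 [h]
  exact inv_mul_cancel a

theorem eq_zero_of_zpow_eq_zpow_sq (h : t⁻¹ * a * t = a⁻¹) (ha : ¬IsOfFinOrder a)
    (ht : ¬IsOfFinOrder (t ^ 2)) {m n : ℤ} (hmn : a ^ m = (t ^ 2) ^ n) : m = 0 ∧ n = 0 := by
  have hneg : a ^ (-m) = (t ^ 2) ^ n := by
    rw [← zpow_conj_of_conj_eq_inv h, hmn, zpow_sq_conj]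
  have hm : m = 0 := by
    have := injective_zpow_iff_not_isOfFinOrder.mpr ha (hneg.trans hmn.symm)
    omega
  subst hm
  exact ⟨rfl, injective_zpow_iff_not_isOfFinOrder.mpr ht (by simpa using hmn.symm)⟩

theorem eq_zero_of_zpow_mul_zpow_sq_conj_eq_inv (h : t⁻¹ * a * t = a⁻¹)
    (ht : ¬IsOfFinOrder (t ^ 2)) {i j : ℤ}
    (hinv : t⁻¹ * (a ^ i * (t ^ 2) ^ j) * t = (a ^ i * (t ^ 2) ^ j)⁻¹) : j = 0 := by
  rw [zpow_mul_zpow_sq_conj h, mul_inv_rev, ← zpow_neg, ← zpow_neg,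
    ← ((commute_sq_of_conj_eq_inv h).zpow_zpow (-i) (-j)).eq, mul_right_inj] at hinv
  have := injective_zpow_iff_not_isOfFinOrder.mpr ht hinv
  omega

end

theorem stmt_3_general {G : Type*} [Group G] (hTF : Monoid.IsTorsionFree G)
    (a b c : G) (h2 : c⁻¹ * b * c = b⁻¹) (h3 : c⁻¹ * a * c = a⁻¹)
    (hKlein : Function.Injective fun v : ℤ × ℤ => a ^ v.1 * b ^ v.2)
    (hbna : b ∉ Subgroup.closure ({a} : Set G)) :
    Commute a (c ^ 2) ∧
      (Function.Injective fun v : ℤ × ℤ => a ^ v.1 * (c ^ 2) ^ v.2) ∧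
      b ∉ Subgroup.closure ({a, c ^ 2} : Set G) := by
  have ha_inj : Function.Injective fun n : ℤ => a ^ n := by
    simpa [Function.comp_def] using hKlein.comp (Prod.mk_left_injective (0 : ℤ))
  have ha : ¬IsOfFinOrder a := injective_zpow_iff_not_isOfFinOrder.mp ha_inj
  have hc : ¬IsOfFinOrder (c ^ 2) := fun hc =>
    hTF c (ne_one_of_conj_eq_inv h3 ha) (hc.of_pow two_ne_zero)
  have hcomm := commute_sq_of_conj_eq_inv h3
  refine ⟨hcomm, injective_zpow_mul_zpow fun _ _ => eq_zero_of_zpow_eq_zpow_sq h3 ha hc, ?_⟩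
  intro hb
  obtain ⟨i, j, rfl⟩ := exists_zpow_mul_zpow_eq_of_mem_closure_pair hcomm hb
  obtain rfl := eq_zero_of_zpow_mul_zpow_sq_conj_eq_inv h3 hc h2
  exact hbna (Subgroup.mem_closure_singleton.mpr ⟨i, by simp⟩)

/-- If a torsion-free group `G` contains `a, b, c` with `b⁻¹ab = a⁻¹`, `c⁻¹bc = b⁻¹`,
`c⁻¹ac = a⁻¹`, and `⟨a,b⟩` is a Klein bottle group, then `a` and `c²` commute,
`⟨a, c²⟩ ≅ ℤ²`, and `b ∉ ⟨a, c²⟩`. -/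
theorem stmt_3 {G : Type*} [Group G] (hTF : Monoid.IsTorsionFree G)
    (a b c : G) (h1 : b⁻¹ * a * b = a⁻¹) (h2 : c⁻¹ * b * c = b⁻¹) (h3 : c⁻¹ * a * c = a⁻¹)
    (hKlein : Function.Injective fun v : ℤ × ℤ => a ^ v.1 * b ^ v.2)
    (hbna : b ∉ Subgroup.closure ({a} : Set G)) :
    Commute a (c ^ 2) ∧
      (Function.Injective fun v : ℤ × ℤ => a ^ v.1 * (c ^ 2) ^ v.2) ∧
      b ∉ Subgroup.closure ({a, c ^ 2} : Set G) :=
  stmt_3_general hTF a b c h2 h3 hKlein hbna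
end

section
/- Let G = A *_H B be an amalgamated free product and let a ∈ A \ H. If a is conjugate in G to an element of H, then there exists w ∈ A \ H with w⁻¹aw ∈ H. -/
open Monoid

/-!
Write `g = y · w` with `y ∈ A` and `w` a reduced word whose first letter is not in `A`. Then
`g⁻¹ a g = w⁻¹ (y⁻¹ a y) w`, and if `y⁻¹ a y ∉ H` the word `w⁻¹ (y⁻¹ a y) w` is reduced and
nonempty, so it does not represent an element of `H`. Hence `y⁻¹ a y ∈ H`, and `y ∉ H` since
otherwise `a` would be conjugate into `H` by an element of `H`.
-/

theorem Subgroup.IsComplement.eq_one_of_mem_of_mem {G : Type*} [Group G] {S T : Set G}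
    (hST : Subgroup.IsComplement S T) (h1S : (1 : G) ∈ S) (h1T : (1 : G) ∈ T) {g : G}
    (hgS : g ∈ S) (hgT : g ∈ T) : g = 1 :=
  congrArg (fun p : S × T => (p.1 : G))
    (hST.1 (a₁ := (⟨g, hgS⟩, ⟨1, h1T⟩)) (a₂ := (⟨1, h1S⟩, ⟨g, hgT⟩)) (by simp))

namespace Monoid.CoprodI.NeWord

variable {ι : Type*} {G : ι → Type*} [∀ i, Group (G i)]

theorem toList_inv {i j : ι} (w : NeWord G i j) :
    w.inv.toList = (w.toList.map fun l => ⟨l.1, l.2⁻¹⟩).reverse := by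
  induction w with
  | singleton => rfl
  | append w₁ hne w₂ ih₁ ih₂ => simp [inv, toList, ih₁, ih₂]

end Monoid.CoprodI.NeWord

namespace Monoid.PushoutI

open CoprodI

variable {ι : Type*} {H : Type*} {G : ι → Type*} [Group H] [∀ i, Group (G i)]
  {φ : ∀ i, H →* G i}

theorem of_mem_base_range_iff (hφ : ∀ i, Function.Injective (φ i)) {i : ι} {x : G i} :
    of i x ∈ (base φ).range ↔ x ∈ (φ i).range := by
  constructor
  · rintro ⟨k, hk⟩
    exact ⟨k, of_injective hφ i (by rw [of_apply_eq_base, hk])⟩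
  · rintro ⟨k, rfl⟩
    exact ⟨k, (of_apply_eq_base φ i k).symm⟩

theorem reduced_neWord_inv {i j : ι} {w : NeWord G i j} (hw : Reduced φ w.toWord) :
    Reduced φ w.inv.toWord := by
  intro l hl
  change l ∈ w.inv.toList at hl
  simp only [NeWord.toList_inv, List.mem_reverse, List.mem_map] at hl
  obtain ⟨l, hl, rfl⟩ := hl
  exact fun h => hw l hl (by simpa using inv_mem h)

theorem reduced_neWord_append {i j k l : ι} {w₁ : NeWord G i j} {hne : j ≠ k}
    {w₂ : NeWord G k l} :
    Reduced φ (NeWord.append w₁ hne w₂).toWord ↔ Reduced φ w₁.toWord ∧ Reduced φ w₂.toWord := by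
  simp [Reduced, NeWord.toWord, NeWord.toList, or_imp, forall_and]

theorem ofCoprodI_neWord_prod_notMem_base_range (hφ : ∀ i, Function.Injective (φ i))
    {i j : ι} {w : NeWord G i j} (hw : Reduced φ w.toWord) :
    ofCoprodI w.prod ∉ (base φ).range := fun h => by
  have := congrArg (·.toList.head?) (hw.eq_empty_of_mem_range hφ h)
  simp [NeWord.toWord, Word.empty] at this

theorem conj_neWord_notMem_base_range (hφ : ∀ i, Function.Injective (φ i)) {i k l : ι}
    {x : G i} (hx : x ∉ (φ i).range) {t : NeWord G k l} (ht : Reduced φ t.toWord)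
    (hki : k ≠ i) :
    (ofCoprodI t.prod)⁻¹ * of i x * ofCoprodI t.prod ∉ (base φ).range := by
  have hx1 : x ≠ 1 := fun h => hx (h ▸ one_mem _)
  let u := NeWord.append (NeWord.append t.inv hki (NeWord.singleton x hx1)) hki.symm t
  have hu : Reduced φ u.toWord := by
    simp only [u, reduced_neWord_append]
    refine ⟨⟨reduced_neWord_inv ht, ?_⟩, ht⟩
    simpa [Reduced, NeWord.toWord, NeWord.toList] using hx
  have hprod : ofCoprodI (φ := φ) u.prod =
      (ofCoprodI t.prod)⁻¹ * of i x * ofCoprodI t.prod := by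
    simp [u]
  exact hprod ▸ ofCoprodI_neWord_prod_notMem_base_range hφ hu

theorem conj_word_notMem_base_range (hφ : ∀ i, Function.Injective (φ i)) {i : ι}
    {x : G i} (hx : x ∉ (φ i).range) {w : Word G} (hw : Reduced φ w)
    (hwi : w.fstIdx ≠ some i) :
    (ofCoprodI w.prod)⁻¹ * of i x * ofCoprodI w.prod ∉ (base φ).range := by
  by_cases hw₀ : w = .empty
  · subst hw₀
    simpa [of_mem_base_range_iff hφ] using hx
  obtain ⟨k, l, t, rfl⟩ := NeWord.of_word w hw₀
  have hki : k ≠ i := by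
    rintro rfl
    exact hwi (by simp [Word.fstIdx, NeWord.toWord])
  exact conj_neWord_notMem_base_range hφ hx hw hki

theorem exists_eq_base_mul_reduced_word (hφ : ∀ i, Function.Injective (φ i)) (g : PushoutI φ) :
    ∃ (h : H) (w : Word G), Reduced φ w ∧ g = base φ h * ofCoprodI w.prod := by
  classical
  obtain ⟨d⟩ := NormalWord.transversal_nonempty φ hφ
  let n := NormalWord.equiv (d := d) g
  refine ⟨n.head, n.toWord, ?_, (NormalWord.equiv.symm_apply_apply g).symm⟩
  rintro ⟨j, y⟩ hl hy
  exact n.ne_one _ hl <| (d.compl j).eq_one_of_mem_of_mem (one_mem _) (d.one_mem j) hy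
    (n.normalized j y hl)

theorem exists_eq_of_mul_reduced_word (hφ : ∀ i, Function.Injective (φ i)) (i : ι)
    (g : PushoutI φ) :
    ∃ (y : G i) (w : Word G), Reduced φ w ∧ w.fstIdx ≠ some i ∧
      g = of i y * ofCoprodI w.prod := by
  classical
  obtain ⟨h, w, hw, rfl⟩ := exists_eq_base_mul_reduced_word hφ g
  let p := Word.equivPair i w
  refine ⟨φ i h * p.head, p.tail, ?_, p.fstIdx_ne, ?_⟩
  · rintro ⟨j, z⟩ hl
    exact hw _ (Word.mem_of_mem_equivPair_tail z hl)
  · rw [map_mul, of_apply_eq_base, mul_assoc, ← ofCoprodI_of, ← map_mul, ← Word.prod_rcons,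
      ← Word.equivPair_symm, Equiv.symm_apply_apply]

end Monoid.PushoutI

open Monoid.PushoutI in
/-- In an amalgamated free product `G = A *_H B` (formalized as the pushout of injective
maps `φ i : H →* G i`), if `a` lies in a factor `A` but not in (the image of) `H`, and `a`
is conjugate in `G` into `H`, then `w⁻¹aw ∈ H` for some `w ∈ A \ H`. -/
theorem stmt_7 {ι : Type*} {H : Type*} {G : ι → Type*} [Group H] [∀ i, Group (G i)]
    (φ : ∀ i, H →* G i) (hφ : ∀ i, Function.Injective (φ i)) (i : ι)
    (a : PushoutI φ)
    (haA : a ∈ (PushoutI.of (φ := φ) i).range)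
    (haH : a ∉ (PushoutI.base φ).range)
    (hconj : ∃ g : PushoutI φ, g⁻¹ * a * g ∈ (PushoutI.base φ).range) :
    ∃ w : PushoutI φ, w ∈ (PushoutI.of (φ := φ) i).range ∧
      w ∉ (PushoutI.base φ).range ∧ w⁻¹ * a * w ∈ (PushoutI.base φ).range := by
  obtain ⟨x, rfl⟩ := haA
  obtain ⟨g, hg⟩ := hconj
  obtain ⟨y, w, hw, hwi, rfl⟩ := exists_eq_of_mul_reduced_word hφ i g
  rw [of_mem_base_range_iff hφ] at haH
  have hxy : y⁻¹ * x * y ∈ (φ i).range := by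
    by_contra hxy
    refine conj_word_notMem_base_range hφ hxy hw hwi ?_
    simpa [mul_assoc] using hg
  refine ⟨of i y, ⟨y, rfl⟩, fun hy => haH ?_, ?_⟩
  · rw [of_mem_base_range_iff hφ] at hy
    simpa [mul_assoc] using mul_mem (mul_mem hy hxy) (inv_mem hy)
  · rwa [← map_inv, ← map_mul, ← map_mul, of_mem_base_range_iff hφ]
end

section
/- Let G = ⟨x, y | x^{2p} = y^q⟩ with p ≥ 1, q ≥ 3, gcd(2p, q) = 1, and z_i = [x^p, (yxy)^i] for i = 1, …, n. Then the set {z_1, …, z_n} freely generates a free subgroup of rank n of G, and the subgroup ⟨x^p, z_1, …, z_n⟩ is isomorphic to the TRAAG of the sink star S_n, namely ⟨a, b_1, …, b_n | b_i a b_i = a for all i⟩. -/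
/-- The torus knot group `⟨x, y | x^{2p} = y^q⟩` as a presented group. -/
def torusKnotRels (p q : ℕ) : Set (FreeGroup (Fin 2)) :=
  {FreeGroup.of 0 ^ (2 * p) * (FreeGroup.of 1 ^ q)⁻¹}

/-- The defining relators of the TRAAG of the sink star `S_n`:
central vertex `none`, end vertices `some i`, and relators `b_i a b_i a⁻¹`
(from the relations `b_i a b_i = a`). -/
def sinkStarRels (n : ℕ) : Set (FreeGroup (Option (Fin n))) :=
  {r | ∃ i : Fin n, r = FreeGroup.of (some i) * FreeGroup.of none *
        FreeGroup.of (some i) * (FreeGroup.of none)⁻¹}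

/-!
Send `x ↦ ξ`, `y ↦ t` onto the free product `ℤ/2p * ℤ/q`. With `w = tξt` and `g = ξ^{-p}` the
image of `z_k` is `(g w g⁻¹)^{-k} w^k`. Ping-pong on reduced words (`w` moves every word not
starting with `t⁻¹` to one starting with `t`, and `g` moves both sets to words starting in the other
factor) shows that `w` and `g w g⁻¹` are free, and ping-pong for the shears `(a, b) ↦ (a + 2kb, b)`,
`(a, b) ↦ (a, b + 2ka)` on integer points with odd coordinate sum shows that the elements
`a^{-k} b^k`, `k ≥ 1`, are free in `F(a, b)`. Hence `z_1, …, z_n` are free.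

In the sink-star TRAAG `a` conjugates every `b_i` to `b_i⁻¹`, so every element is `w(b) a^k`.
Its image `w(z) x^{pk}` has degree `pqk` for the homomorphism `x ↦ q`, `y ↦ 2p` to `ℤ`, which kills
the commutators `z_i`; so it is trivial only if `k = 0` and then `w = 1`.
-/

theorem Int.abs_lt_abs_add_two_mul {a b k : ℤ} (hab : |a| < |b|) (hk : k ≠ 0) :
    |b| < |a + 2 * (k * b)| := by
  have h1 : 1 ≤ |k| := Int.one_le_abs hk
  have h2 : |2 * (k * b)| ≤ |a| + |a + 2 * (k * b)| := by
    simpa using abs_sub_le (2 * (k * b)) (a + 2 * (k * b)) 0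
  rw [abs_mul, abs_mul, abs_two] at h2
  nlinarith [abs_nonneg b]

theorem Multiplicative.ofAdd_one_pow_self (n : ℕ) :
    Multiplicative.ofAdd (1 : ZMod n) ^ n = 1 := by
  rw [← ofAdd_nsmul, nsmul_one, ZMod.natCast_self, ofAdd_zero]

section Conjugation

variable {G : Type*} [Group G]

theorem mul_mul_eq_of_commute_sq {h v : G} (hv : Commute (h ^ 2) v) :
    (h⁻¹ * v⁻¹ * h * v) * h * (h⁻¹ * v⁻¹ * h * v) = h :=
  calc (h⁻¹ * v⁻¹ * h * v) * h * (h⁻¹ * v⁻¹ * h * v) = h⁻¹ * (v⁻¹ * (h * h * v)) := by group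
    _ = h := by rw [← sq, hv.eq, inv_mul_cancel_left]; group

theorem conj_eq_inv_of_mul_mul_eq {a b : G} (h : b * a * b = a) : a * b * a⁻¹ = b⁻¹ := by
  rw [mul_inv_eq_iff_eq_mul, eq_inv_mul_iff_mul_eq, ← mul_assoc, h]

theorem inv_conj_eq_inv_of_mul_mul_eq {a b : G} (h : b * a * b = a) : a⁻¹ * b * a⁻¹⁻¹ = b⁻¹ := by
  rw [inv_inv, mul_assoc, inv_mul_eq_iff_eq_mul, eq_mul_inv_iff_mul_eq, h]

end Conjugation

namespace FreeGroup

theorem injective_lift_comp {ι κ G : Type*} [Group G] {f : ι → G}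
    (hf : Function.Injective (lift f)) {e : κ → ι} (he : Function.Injective e) :
    Function.Injective (lift (f ∘ e)) := by
  have hcomp : lift (f ∘ e) = (lift f).comp (map e) := ext_hom _ _ fun _ => by simp
  rw [hcomp, MonoidHom.coe_comp]
  exact hf.comp (map_injective he)

theorem conj_lift_eq_lift_lift_inv_of {ι G : Type*} [Group G] {b : ι → G} {c : G}
    (hc : ∀ i, c * b i * c⁻¹ = (b i)⁻¹) (w : FreeGroup ι) :
    c * lift b w * c⁻¹ = lift b (lift (fun i => (of i)⁻¹) w) := by
  have hcomp : (MulAut.conj c).toMonoidHom.comp (lift b) =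
      (lift b).comp (lift fun i => (of i)⁻¹) :=
    ext_hom _ _ fun i => by simp [hc]
  simpa using DFunLike.congr_fun hcomp w

-- `G : Type` because `FreeGroup.injective_lift_of_ping_pong` puts `G` in the universe of `Bool`.
open scoped Pointwise in
theorem injective_lift_conj_of_ping_pong {G : Type} {α : Type*} [Group G] [MulAction G α]
    {w g : G} {X Y : Set α} (hX : X.Nonempty) (hXY : Disjoint X Y) (hwY : w • Yᶜ ⊆ X)
    (hwX : w⁻¹ • Xᶜ ⊆ Y) (hg : Disjoint (g • (X ∪ Y)) (X ∪ Y)) :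
    Function.Injective (lift fun b : Bool => cond b w (g * w * g⁻¹)) := by
  rw [Set.smul_set_union, Set.disjoint_union_left, Set.disjoint_union_right,
    Set.disjoint_union_right] at hg
  obtain ⟨⟨hgXX, hgXY⟩, hgYX, hgYY⟩ := hg
  have hconj (h : G) (S : Set α) : (g * h * g⁻¹) • (g • S)ᶜ = g • h • Sᶜ := by
    rw [← Set.smul_set_compl, smul_smul, smul_smul, inv_mul_cancel_right]
  apply injective_lift_of_ping_pong _ (fun b => cond b X (g • X)) (fun b => cond b Y (g • Y))
  · rintro (_ | _)
    exacts [hX.smul_set, hX]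
  · exact pairwise_disjoint_on_bool.mpr hgXX.symm
  · exact pairwise_disjoint_on_bool.mpr hgYY.symm
  · rintro (_ | _) (_ | _)
    exacts [Set.disjoint_smul_set.mpr hXY, hgXY, hgYX.symm, hXY]
  · rintro (_ | _)
    · simpa only [cond_false, hconj] using Set.smul_set_mono (a := g) hwY
    · exact hwY
  · rintro (_ | _)
    · have hinv : (g * w * g⁻¹)⁻¹ = g * w⁻¹ * g⁻¹ := by group
      simpa only [Pi.inv_apply, cond_false, hinv, hconj] using Set.smul_set_mono (a := g) hwX
    · exact hwX

end FreeGroup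

/-- Odd coordinate sum rules out `|a| = |b|`, so every point lies in exactly one of the cones
`dominantFst`, `dominantSnd`. -/
abbrev OddLattice : Type := {v : ℤ × ℤ // Odd (v.1 + v.2)}

namespace OddLattice

def shearFst (k : ℤ) : Equiv.Perm OddLattice where
  toFun v := ⟨(v.1.1 + 2 * (k * v.1.2), v.1.2), by
    simpa only [add_right_comm] using v.2.add_even (even_two_mul (k * v.1.2))⟩
  invFun v := ⟨(v.1.1 - 2 * (k * v.1.2), v.1.2), by
    simpa only [sub_add_eq_add_sub] using v.2.sub_even (even_two_mul (k * v.1.2))⟩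
  left_inv v := by ext <;> simp
  right_inv v := by ext <;> simp

def shearSnd (k : ℤ) : Equiv.Perm OddLattice where
  toFun v := ⟨(v.1.1, v.1.2 + 2 * (k * v.1.1)), by
    simpa only [add_assoc] using v.2.add_even (even_two_mul (k * v.1.1))⟩
  invFun v := ⟨(v.1.1, v.1.2 - 2 * (k * v.1.1)), by
    simpa only [add_sub_assoc] using v.2.sub_even (even_two_mul (k * v.1.1))⟩
  left_inv v := by ext <;> simp
  right_inv v := by ext <;> simp

@[simp]
theorem shearFst_apply (k : ℤ) (v : OddLattice) :
    (shearFst k v : ℤ × ℤ) = (v.1.1 + 2 * (k * v.1.2), v.1.2) := rfl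

@[simp]
theorem shearSnd_apply (k : ℤ) (v : OddLattice) :
    (shearSnd k v : ℤ × ℤ) = (v.1.1, v.1.2 + 2 * (k * v.1.1)) := rfl

theorem shearFst_add (k l : ℤ) : shearFst (k + l) = shearFst k * shearFst l := by
  ext v
  · simp only [shearFst_apply, Equiv.Perm.coe_mul, Function.comp_apply]
    ring
  · rfl

theorem shearSnd_add (k l : ℤ) : shearSnd (k + l) = shearSnd k * shearSnd l := by
  ext v
  · rfl
  · simp only [shearSnd_apply, Equiv.Perm.coe_mul, Function.comp_apply]
    ring

theorem shearFst_zero : shearFst 0 = 1 := by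
  ext v <;> simp

theorem shearSnd_zero : shearSnd 0 = 1 := by
  ext v <;> simp

theorem shearFst_one_pow (n : ℕ) : shearFst 1 ^ n = shearFst n := by
  induction n with
  | zero => exact shearFst_zero.symm
  | succ n ih => rw [pow_succ, ih, Nat.cast_succ, shearFst_add]

theorem shearSnd_one_pow (n : ℕ) : shearSnd 1 ^ n = shearSnd n := by
  induction n with
  | zero => exact shearSnd_zero.symm
  | succ n ih => rw [pow_succ, ih, Nat.cast_succ, shearSnd_add]

def dominantFst : Set OddLattice := {v | |v.1.2| < |v.1.1|}

def dominantSnd : Set OddLattice := {v | |v.1.1| < |v.1.2|}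

theorem abs_fst_ne_abs_snd (v : OddLattice) : |v.1.1| ≠ |v.1.2| := by
  intro h
  have hv := Int.odd_iff.mp v.2
  rcases abs_eq_abs.mp h with h' | h' <;> omega

theorem compl_dominantFst : dominantFstᶜ = dominantSnd := by
  ext v
  exact not_lt.trans (abs_fst_ne_abs_snd v).le_iff_lt

theorem compl_dominantSnd : dominantSndᶜ = dominantFst := by
  rw [← compl_dominantFst, compl_compl]

theorem disjoint_dominantFst_dominantSnd : Disjoint dominantFst dominantSnd := by
  rw [← compl_dominantFst]
  exact disjoint_compl_right

theorem shearFst_mem_dominantFst {k : ℤ} (hk : k ≠ 0) {v : OddLattice} (hv : v ∈ dominantSnd) :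
    shearFst k v ∈ dominantFst :=
  Int.abs_lt_abs_add_two_mul hv hk

theorem shearSnd_mem_dominantSnd {k : ℤ} (hk : k ≠ 0) {v : OddLattice} (hv : v ∈ dominantFst) :
    shearSnd k v ∈ dominantSnd :=
  Int.abs_lt_abs_add_two_mul hv hk

theorem injective_lift_inv_shearFst_mul_shearSnd :
    Function.Injective (FreeGroup.lift fun k : ℕ => (shearFst (k + 1))⁻¹ * shearSnd (k + 1)) := by
  have hpos (k : ℕ) : ((k : ℤ) + 1) ≠ 0 := by omega
  have hsub {k l : ℕ} (h : k ≠ l) : ((l : ℤ) + 1) - (k + 1) ≠ 0 := by omega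
  apply FreeGroup.injective_lift_of_ping_pong _
    (fun k : ℕ => {v | shearFst (k + 1) v ∈ dominantSnd})
    (fun k : ℕ => {v | shearSnd (k + 1) v ∈ dominantFst})
  · intro k
    refine ⟨(shearFst (k + 1)).symm ⟨(0, 1), by decide⟩, ?_⟩
    rw [Set.mem_ofPred_eq, Equiv.apply_symm_apply]
    simp [dominantSnd]
  · intro k l hkl
    refine Set.disjoint_left.mpr fun v hk hl => disjoint_dominantFst_dominantSnd.ne_of_mem
      (shearFst_mem_dominantFst (hsub hkl) hk) hl ?_
    rw [← Equiv.Perm.mul_apply, ← shearFst_add, sub_add_cancel]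
  · intro k l hkl
    refine Set.disjoint_left.mpr fun v hk hl => disjoint_dominantFst_dominantSnd.ne_of_mem
      hl (shearSnd_mem_dominantSnd (hsub hkl) hk) ?_
    rw [← Equiv.Perm.mul_apply, ← shearSnd_add, sub_add_cancel]
  · intro k l
    refine Set.disjoint_left.mpr fun v hk hl => disjoint_dominantFst_dominantSnd.ne_of_mem
      hl (shearSnd_mem_dominantSnd (hpos l) ?_) rfl
    have := shearFst_mem_dominantFst (neg_ne_zero.mpr (hpos k)) hk
    rwa [← Equiv.Perm.mul_apply, ← shearFst_add, neg_add_cancel, shearFst_zero] at this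
  · rintro k _ ⟨v, hv, rfl⟩
    rw [Set.mem_compl_iff, Set.notMem_ofPred_iff, ← Set.mem_compl_iff, compl_dominantFst] at hv
    simpa using hv
  · rintro k _ ⟨v, hv, rfl⟩
    rw [Set.mem_compl_iff, Set.notMem_ofPred_iff, ← Set.mem_compl_iff, compl_dominantSnd] at hv
    simpa using hv

end OddLattice

theorem FreeGroup.injective_lift_inv_pow_mul_pow :
    Function.Injective (lift fun k : ℕ => (of false ^ (k + 1))⁻¹ * of true ^ (k + 1)) := by
  open OddLattice in
  have hcomp : (lift fun b => cond b (shearSnd 1) (shearFst 1)).comp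
      (lift fun k : ℕ => (of false ^ (k + 1))⁻¹ * of true ^ (k + 1)) =
      lift fun k : ℕ => (shearFst (k + 1))⁻¹ * shearSnd (k + 1) :=
    ext_hom _ _ fun k => by simp [shearFst_one_pow, shearSnd_one_pow]
  have hinj := OddLattice.injective_lift_inv_shearFst_mul_shearSnd
  rw [← hcomp, MonoidHom.coe_comp] at hinj
  exact hinj.of_comp

namespace Monoid.CoprodI

namespace Word

variable {ι : Type*} {M : ι → Type*} [DecidableEq ι]

section Monoid

variable [∀ i, Monoid (M i)] [∀ i, DecidableEq (M i)]

theorem equivPair_head_eq_one_of_fstIdx_ne {i : ι} {w : Word M} (h : w.fstIdx ≠ some i) :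
    (equivPair i w).head = 1 := by
  rw [equivPair_eq_of_fstIdx_ne h]

theorem fstIdx_eq_of_equivPair_head_ne_one {i : ι} {w : Word M}
    (h : (equivPair i w).head ≠ 1) : w.fstIdx = some i :=
  not_imp_comm.mp equivPair_head_eq_one_of_fstIdx_ne h

theorem equivPair_head_of_smul {i : ι} (m : M i) (w : Word M) :
    (equivPair i (of m • w)).head = m * (equivPair i w).head := by
  rw [equivPair_smul_same]

theorem fstIdx_of_smul {i : ι} {m : M i} {w : Word M} (h : m * (equivPair i w).head ≠ 1) :
    (of m • w).fstIdx = some i := by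
  rw [of_smul_def, rcons, dif_neg h, fstIdx_cons]

theorem fstIdx_of_smul_of_fstIdx_ne {i : ι} {m : M i} (hm : m ≠ 1) {w : Word M}
    (hw : w.fstIdx ≠ some i) : (of m • w).fstIdx = some i :=
  fstIdx_of_smul (by rwa [equivPair_head_eq_one_of_fstIdx_ne hw, mul_one])

end Monoid

theorem equivPair_head_of_mul_of_mul_of_smul [∀ i, Group (M i)] [∀ i, DecidableEq (M i)]
    {i j : ι} (hij : i ≠ j) (a : M i) {b : M j} (hb : b ≠ 1) {c : M i} {w : Word M}
    (hc : (equivPair i w).head ≠ c⁻¹) :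
    (equivPair i ((of a * of b * of c) • w)).head = a := by
  have hcw : (of c • w).fstIdx = some i := fstIdx_of_smul (mul_eq_one_iff_eq_inv'.not.mpr hc)
  have hbcw : (of b • of c • w).fstIdx = some j :=
    fstIdx_of_smul_of_fstIdx_ne hb (by rw [hcw]; simpa using hij)
  rw [mul_smul, mul_smul, equivPair_head_of_smul,
    equivPair_head_eq_one_of_fstIdx_ne (by rw [hbcw]; simpa using hij.symm), mul_one]

end Word

open Word

theorem injective_lift_conj_of_mul_of_mul_of {ι : Type} {M : ι → Type} [∀ i, Group (M i)]
    [DecidableEq ι] [∀ i, DecidableEq (M i)] {i j : ι} (hij : i ≠ j) {t : M i} (ht : t ≠ t⁻¹)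
    {ξ u : M j} (hξ : ξ ≠ 1) (hu : u ≠ 1) :
    Function.Injective (FreeGroup.lift fun b : Bool => cond b (of t * of ξ * of t)
      (of u * (of t * of ξ * of t) * (of u)⁻¹)) := by
  have ht1 : t ≠ 1 := fun h => ht (by rw [h, inv_one])
  -- `(equivPair i v).head` is the first letter of `v` if that letter lies in `M i`, else `1`.
  refine FreeGroup.injective_lift_conj_of_ping_pong (X := {v : Word M | (equivPair i v).head = t})
    (Y := {v : Word M | (equivPair i v).head = t⁻¹}) ⟨of t • empty, ?_⟩ ?_ ?_ ?_ ?_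
  · rw [Set.mem_ofPred_eq, equivPair_head_of_smul,
      equivPair_head_eq_one_of_fstIdx_ne (by simp [fstIdx, empty]), mul_one]
  · exact Set.disjoint_left.mpr fun v (hX : _ = t) (hY : _ = t⁻¹) => ht (hX ▸ hY)
  · rintro _ ⟨v, hv : ¬ _ = t⁻¹, rfl⟩
    exact equivPair_head_of_mul_of_mul_of_smul hij t hξ hv
  · rintro _ ⟨v, hv : ¬ _ = t, rfl⟩
    have hw : (of t * of ξ * of t)⁻¹ = of t⁻¹ * of ξ⁻¹ * of t⁻¹ := by
      simp only [mul_inv_rev, map_inv, mul_assoc]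
    rw [Set.mem_ofPred_eq, hw]
    exact equivPair_head_of_mul_of_mul_of_smul hij t⁻¹ (inv_ne_one.mpr hξ) (by rwa [inv_inv])
  · have hne : ∀ v ∈ {v : Word M | (equivPair i v).head = t} ∪ {v | (equivPair i v).head = t⁻¹},
        (equivPair i v).head ≠ 1 := by
      rintro v (hv | hv) <;> rw [hv]
      exacts [ht1, inv_ne_one.mpr ht1]
    refine Set.disjoint_left.mpr ?_
    rintro _ ⟨v, hv, rfl⟩ huv
    have hj : (of u • v).fstIdx = some j := fstIdx_of_smul_of_fstIdx_ne hu
      (by rw [fstIdx_eq_of_equivPair_head_ne_one (hne v hv)]; simpa using hij)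
    exact hne _ huv (equivPair_head_eq_one_of_fstIdx_ne (by rw [hj]; simpa using hij.symm))

end Monoid.CoprodI

namespace SinkStar

variable {n : ℕ} {H : Type*} [Group H]

def lift (a : H) (b : Fin n → H) (hrel : ∀ i, b i * a * b i = a) :
    PresentedGroup (sinkStarRels n) →* H :=
  PresentedGroup.toGroup (f := fun o => o.elim a b) <| by
    rintro _ ⟨i, rfl⟩
    simp [hrel]

theorem lift_of_none (a : H) (b : Fin n → H) (hrel : ∀ i, b i * a * b i = a) :
    lift a b hrel (.of none) = a :=
  PresentedGroup.toGroup.of _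

theorem lift_comp_lift_of_some (a : H) (b : Fin n → H) (hrel : ∀ i, b i * a * b i = a) :
    (lift a b hrel).comp (FreeGroup.lift fun i => .of (some i)) = FreeGroup.lift b :=
  FreeGroup.ext_hom _ _ fun i => by simp [lift]

theorem range_lift (a : H) (b : Fin n → H) (hrel : ∀ i, b i * a * b i = a) :
    (lift a b hrel).range = Subgroup.closure ({a} ∪ Set.range b) := by
  rw [MonoidHom.range_eq_map, ← PresentedGroup.closure_range_of, MonoidHom.map_closure,
    ← Set.range_comp, ← Set.insert_eq, ← Option.range_elim]
  congr 2
  ext o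
  exact PresentedGroup.toGroup.of _

theorem of_some_mul_of_none_mul_of_some (i : Fin n) :
    .of (some i) * .of none * .of (some i) = (.of none : PresentedGroup (sinkStarRels n)) := by
  rw [← mul_inv_eq_one]
  exact PresentedGroup.one_of_mem ⟨i, rfl⟩

theorem exists_eq_lift_mul_zpow (t : PresentedGroup (sinkStarRels n)) :
    ∃ (w : FreeGroup (Fin n)) (k : ℤ),
      t = FreeGroup.lift (fun i => .of (some i)) w * .of none ^ k := by
  have ht : t ∈ Subgroup.closure (Set.range PresentedGroup.of) := by simp
  induction ht using Subgroup.closure_induction_left with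
  | one => exact ⟨1, 0, by simp⟩
  | mul_left _ hx _ _ ih =>
    obtain ⟨o, rfl⟩ := hx
    obtain ⟨w, k, rfl⟩ := ih
    cases o with
    | none =>
      refine ⟨FreeGroup.lift (fun i => (.of i)⁻¹) w, k + 1, ?_⟩
      rw [← FreeGroup.conj_lift_eq_lift_lift_inv_of fun i =>
        conj_eq_inv_of_mul_mul_eq (of_some_mul_of_none_mul_of_some i)]
      group
    | some i => exact ⟨.of i * w, k, by simp [mul_assoc]⟩
  | inv_mul_cancel _ hx _ _ ih =>
    obtain ⟨o, rfl⟩ := hx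
    obtain ⟨w, k, rfl⟩ := ih
    cases o with
    | none =>
      refine ⟨FreeGroup.lift (fun i => (.of i)⁻¹) w, k - 1, ?_⟩
      rw [← FreeGroup.conj_lift_eq_lift_lift_inv_of fun i =>
        inv_conj_eq_inv_of_mul_mul_eq (of_some_mul_of_none_mul_of_some i)]
      group
    | some i => exact ⟨(.of i)⁻¹ * w, k, by simp [mul_assoc]⟩

theorem injective_lift (a : H) (b : Fin n → H) (hrel : ∀ i, b i * a * b i = a)
    (hb : Function.Injective (FreeGroup.lift b))
    (hab : ∀ w (k : ℤ), FreeGroup.lift b w * a ^ k = 1 → k = 0) :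
    Function.Injective (lift a b hrel) := by
  refine (injective_iff_map_eq_one _).mpr fun t ht => ?_
  obtain ⟨w, k, rfl⟩ := exists_eq_lift_mul_zpow t
  rw [map_mul, map_zpow, lift_of_none, ← MonoidHom.comp_apply, lift_comp_lift_of_some] at ht
  obtain rfl := hab w k ht
  rw [zpow_zero, mul_one] at ht ⊢
  rw [(injective_iff_map_eq_one _).mp hb w ht, map_one]

end SinkStar

abbrev TorusKnotGroup (p q : ℕ) : Type := PresentedGroup (torusKnotRels p q)

namespace TorusKnotGroup

variable (p q : ℕ)

def x : TorusKnotGroup p q := PresentedGroup.of 0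

def y : TorusKnotGroup p q := PresentedGroup.of 1

def z (k : ℕ) : TorusKnotGroup p q :=
  (x p q ^ p)⁻¹ * ((y p q * x p q * y p q) ^ k)⁻¹ * x p q ^ p * (y p q * x p q * y p q) ^ k

theorem x_pow_eq_y_pow : x p q ^ (2 * p) = y p q ^ q := by
  rw [← mul_inv_eq_one]
  exact PresentedGroup.one_of_mem rfl

theorem commute_x_pow (g : TorusKnotGroup p q) : Commute (x p q ^ (2 * p)) g := by
  refine Subgroup.mem_centralizer_singleton_iff.mp
    (PresentedGroup.generated_by _ _ (fun i => ?_) g) |>.symm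
  rw [Subgroup.mem_centralizer_singleton_iff]
  fin_cases i
  · exact (Commute.self_pow (x p q) _).eq
  · rw [x_pow_eq_y_pow]
    exact (Commute.self_pow (y p q) _).eq

theorem z_mul_x_pow_mul_z (k : ℕ) : z p q k * x p q ^ p * z p q k = x p q ^ p :=
  mul_mul_eq_of_commute_sq (by rw [← pow_mul, mul_comm]; exact commute_x_pow p q _)

abbrev CyclicFactor (i : Fin 2) : Type := Multiplicative (ZMod (![2 * p, q] i))

def gen (i : Fin 2) : CyclicFactor p q i := Multiplicative.ofAdd 1

def toFreeProd : TorusKnotGroup p q →* Monoid.CoprodI (CyclicFactor p q) :=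
  PresentedGroup.toGroup (f := fun i => Monoid.CoprodI.of (gen p q i)) <| by
    rintro _ rfl
    have h0 : gen p q 0 ^ (2 * p) = 1 := Multiplicative.ofAdd_one_pow_self _
    have h1 : gen p q 1 ^ q = 1 := Multiplicative.ofAdd_one_pow_self _
    rw [map_mul, map_inv, map_pow, map_pow, FreeGroup.lift_apply_of, FreeGroup.lift_apply_of,
      ← MonoidHom.map_pow, ← MonoidHom.map_pow, h0, h1, map_one, map_one, inv_one, one_mul]

def degree : TorusKnotGroup p q →* Multiplicative ℤ :=
  PresentedGroup.toGroup (f := fun i => Multiplicative.ofAdd (![(q : ℤ), 2 * p] i)) <| by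
    rintro _ rfl
    simp only [map_mul, map_inv, map_pow, FreeGroup.lift_apply_of, mul_inv_eq_one,
      Matrix.cons_val_zero, Matrix.cons_val_one, ← ofAdd_nsmul, nsmul_eq_mul]
    congr 1
    push_cast
    ring

theorem degree_z (k : ℕ) : degree p q (z p q k) = 1 := by
  simp only [z, map_mul, map_inv]
  simp [mul_comm]

theorem degree_x : degree p q (x p q) = Multiplicative.ofAdd (q : ℤ) :=
  PresentedGroup.toGroup.of _

theorem eq_zero_of_lift_z_mul_zpow_eq_one (hp : 1 ≤ p) (hq : 1 ≤ q) {ι : Type*} (e : ι → ℕ)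
    (w : FreeGroup ι) (k : ℤ) (h : FreeGroup.lift (fun i => z p q (e i)) w * (x p q ^ p) ^ k = 1) :
    k = 0 := by
  have hdeg : (degree p q).comp (FreeGroup.lift fun i => z p q (e i)) = 1 :=
    FreeGroup.ext_hom _ _ fun i => by simp [degree_z]
  have hk := congrArg (degree p q) h
  rw [map_mul, ← MonoidHom.comp_apply, hdeg, MonoidHom.one_apply, one_mul, map_zpow, map_pow,
    degree_x, map_one, ← ofAdd_nsmul, ← ofAdd_zsmul, ofAdd_eq_one, smul_eq_mul, nsmul_eq_mul] at hk
  have hpq : (p : ℤ) * q ≠ 0 := by positivity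
  exact (mul_eq_zero.mp hk).resolve_right hpq

theorem toFreeProd_of (i : Fin 2) : toFreeProd p q (.of i) = Monoid.CoprodI.of (gen p q i) :=
  PresentedGroup.toGroup.of _

theorem injective_lift_z (hp : 1 ≤ p) (hq : 3 ≤ q) :
    Function.Injective (FreeGroup.lift fun k : ℕ => z p q (k + 1)) := by
  have : Fact (2 < ![2 * p, q] 1) := ⟨hq⟩
  have : Fact (1 < ![2 * p, q] 0) := ⟨show 1 < 2 * p by omega⟩
  have ht : gen p q 1 ≠ (gen p q 1)⁻¹ := fun h =>
    ZMod.neg_one_ne_one (Multiplicative.ofAdd.injective h).symm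
  have hξ : gen p q 0 ≠ 1 := ofAdd_eq_one.not.mpr one_ne_zero
  have hu : (gen p q 0 ^ p)⁻¹ ≠ 1 := by
    rw [inv_ne_one, gen, ← ofAdd_nsmul, nsmul_one, Ne, ofAdd_eq_one, ZMod.natCast_eq_zero_iff]
    exact fun h : 2 * p ∣ p => absurd (Nat.le_of_dvd (by omega) h) (by omega)
  set w := Monoid.CoprodI.of (gen p q 1) * .of (gen p q 0) * .of (gen p q 1)
  set g := Monoid.CoprodI.of (gen p q 0 ^ p)⁻¹
  have hcomp : (toFreeProd p q).comp (FreeGroup.lift fun k : ℕ => z p q (k + 1)) =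
      (FreeGroup.lift fun b : Bool => cond b w (g * w * g⁻¹)).comp
        (FreeGroup.lift fun k : ℕ => (.of false ^ (k + 1))⁻¹ * .of true ^ (k + 1)) :=
    FreeGroup.ext_hom _ _ fun k => by
      simp only [MonoidHom.comp_apply, FreeGroup.lift_apply_of, map_mul, map_inv, map_pow, z, x, y,
        toFreeProd_of, cond_true, cond_false, conj_pow, g, w]
      group
  have hinj := (Monoid.CoprodI.injective_lift_conj_of_mul_of_mul_of (by decide) ht hξ hu).comp
    FreeGroup.injective_lift_inv_pow_mul_pow
  rw [← MonoidHom.coe_comp, ← hcomp, MonoidHom.coe_comp] at hinj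
  exact hinj.of_comp

end TorusKnotGroup

theorem stmt_10_general (p q n : ℕ) (hp : 1 ≤ p) (hq : 3 ≤ q) :
    letI x : PresentedGroup (torusKnotRels p q) := PresentedGroup.of 0
    letI y : PresentedGroup (torusKnotRels p q) := PresentedGroup.of 1
    letI z : ℕ → PresentedGroup (torusKnotRels p q) := fun i =>
      (x ^ p)⁻¹ * ((y * x * y) ^ i)⁻¹ * x ^ p * (y * x * y) ^ i
    Function.Injective ⇑(FreeGroup.lift fun i : Fin n => z (i.1 + 1)) ∧
      Nonempty (PresentedGroup (sinkStarRels n) ≃*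
        (Subgroup.closure ({x ^ p} ∪ Set.range fun i : Fin n => z (i.1 + 1)) :
          Subgroup (PresentedGroup (torusKnotRels p q)))) := by
  have hfree :
      Function.Injective (FreeGroup.lift fun i : Fin n => TorusKnotGroup.z p q (i.1 + 1)) :=
    FreeGroup.injective_lift_comp (TorusKnotGroup.injective_lift_z p q hp hq) Fin.val_injective
  have hrel (i : Fin n) := TorusKnotGroup.z_mul_x_pow_mul_z p q (i.1 + 1)
  have hemb := SinkStar.injective_lift _ _ hrel hfree
    (TorusKnotGroup.eq_zero_of_lift_z_mul_zpow_eq_one p q hp (by omega) _)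
  exact ⟨hfree, ⟨(MonoidHom.ofInjective hemb).trans
    (MulEquiv.subgroupCongr (SinkStar.range_lift _ _ hrel))⟩⟩

/-- In the torus knot group `G = ⟨x, y | x^{2p} = y^q⟩` (`p ≥ 1`, `q ≥ 3`,
`gcd(2p,q) = 1`), with `z_i = [x^p, (yxy)^i]` for `i = 1, …, n`, the elements
`z_1, …, z_n` freely generate a free subgroup of rank `n`, and the subgroup
`⟨x^p, z_1, …, z_n⟩` is isomorphic to the TRAAG of the sink star `S_n`, i.e.
`⟨a, b_1, …, b_n | b_i a b_i = a⟩`. -/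
theorem stmt_10 (p q n : ℕ) (hp : 1 ≤ p) (hq : 3 ≤ q)
    (hcop : Nat.Coprime (2 * p) q) :
    letI x : PresentedGroup (torusKnotRels p q) := PresentedGroup.of 0
    letI y : PresentedGroup (torusKnotRels p q) := PresentedGroup.of 1
    letI z : ℕ → PresentedGroup (torusKnotRels p q) := fun i =>
      (x ^ p)⁻¹ * ((y * x * y) ^ i)⁻¹ * x ^ p * (y * x * y) ^ i
    Function.Injective ⇑(FreeGroup.lift fun i : Fin n => z (i.1 + 1)) ∧
      Nonempty (PresentedGroup (sinkStarRels n) ≃*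
        (Subgroup.closure ({x ^ p} ∪ Set.range fun i : Fin n => z (i.1 + 1)) :
          Subgroup (PresentedGroup (torusKnotRels p q)))) :=
  stmt_10_general p q n hp hq
end

section
/- Let G be a group with a central element h, and suppose c, x ∈ G satisfy (x⁻¹cx)² = h. If c lies in an abelian subgroup ⟨m, λ⟩ ≅ ℤ² containing h = m^{2pq}λ, with c = m^{pq}λ^j, and G is torsion-free, then a contradiction arises: λ^{2j−1} = 1 forces a torsion element. -/
theorem pow_eq_of_conj_pow_eq_of_mem_center {G : Type*} [Group G] {c x h : G} {n : ℕ}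
    (hcent : h ∈ Subgroup.center G) (hx : (x⁻¹ * c * x) ^ n = h) : c ^ n = h := by
  have hconj : x⁻¹ * c ^ n * x = h := by
    simpa only [inv_inv] using (conj_pow (a := x⁻¹) (b := c) (i := n)).symm.trans (by rwa [inv_inv])
  calc c ^ n = x * h * x⁻¹ := by rw [← hconj]; group
    _ = h := by rw [Subgroup.mem_center_iff.mp hcent x, mul_inv_cancel_right]

theorem Commute.mul_zpow_zpow_zpow {G : Type*} [Group G] {m l : G} (hml : Commute m l)
    (a b n : ℤ) : (m ^ a * l ^ b) ^ n = m ^ (n * a) * l ^ (n * b) := by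
  rw [(hml.zpow_zpow a b).mul_zpow, ← zpow_mul, ← zpow_mul, mul_comm a, mul_comm b]

theorem stmt_14_general {G : Type*} [Group G]
    (h c x m lam : G) (hcent : h ∈ Subgroup.center G)
    (hx : (x⁻¹ * c * x) ^ 2 = h)
    (hcomm : m * lam = lam * m)
    (hZ2 : Function.Injective fun v : ℤ × ℤ => m ^ v.1 * lam ^ v.2)
    (p q : ℕ)
    (hh : h = m ^ (2 * p * q) * lam)
    (j : ℤ) (hc : c = m ^ (p * q) * lam ^ j) :
    False := by
  have hc2 : c ^ 2 = h := pow_eq_of_conj_pow_eq_of_mem_center hcent hx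
  have hexp : (2 * ((p * q : ℕ) : ℤ), 2 * j) = (((2 * p * q : ℕ) : ℤ), 1) := by
    apply hZ2
    calc m ^ (2 * ((p * q : ℕ) : ℤ)) * lam ^ (2 * j)
        = (m ^ ((p * q : ℕ) : ℤ) * lam ^ j) ^ (2 : ℤ) :=
          (Commute.mul_zpow_zpow_zpow hcomm _ _ 2).symm
      _ = h := by rw [zpow_natCast, ← hc, zpow_ofNat, hc2]
      _ = m ^ ((2 * p * q : ℕ) : ℤ) * lam ^ (1 : ℤ) := by rw [hh, zpow_natCast, zpow_one]
  have h2j : 2 * j = 1 := congrArg Prod.snd hexp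
  omega

/-- Let `G` be a torsion-free group with a central element `h`, and `c, x ∈ G` with
`(x⁻¹cx)² = h`. If `c` lies in an abelian subgroup `⟨m, λ⟩ ≅ ℤ²` containing
`h = m^{2pq}λ`, with `c = m^{pq}λʲ`, then a contradiction arises (the forced relation
`λ^{2j−1} = 1` yields a torsion element). -/
theorem stmt_14 {G : Type*} [Group G] (hTF : ∀ g : G, g ≠ 1 → ¬IsOfFinOrder g)
    (h c x m lam : G) (hcent : h ∈ Subgroup.center G)
    (hx : (x⁻¹ * c * x) ^ 2 = h)
    (hcomm : m * lam = lam * m)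
    (hZ2 : Function.Injective fun v : ℤ × ℤ => m ^ v.1 * lam ^ v.2)
    (p q : ℕ) (hp : 1 ≤ p) (hq : 1 ≤ q)
    (hh : h = m ^ (2 * p * q) * lam)
    (j : ℤ) (hc : c = m ^ (p * q) * lam ^ j) :
    False :=
  stmt_14_general h c x m lam hcent hx hcomm hZ2 p q hh j hc
end

section
/- Let G = A *_H B be an amalgamated free product, and let a ∈ A \ H, b ∈ B \ H with the property that b^i ∉ H for all nonzero integers i and H is malnormal in B (i.e. x⁻¹Hx ∩ H = {1} for x ∈ B \ H). Let S ≤ A be a subgroup. Then the subgroup of G generated by (ba)⁻¹S(ba) and b is isomorphic to the free product S * ⟨b⟩ ≅ S * ℤ. -/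
open Monoid

/-!
Write `G = A *_H B`. For `1 ≠ s ∈ A`, the conjugate `(ba)⁻¹ s (ba) = a⁻¹ (b⁻¹ s b) a` has a
reduced form beginning and ending with a syllable of `A \ H`: if `s ∉ H` this is the word
`a⁻¹ b⁻¹ s b a`, and if `s ∈ H` then `b⁻¹ s b ∈ B \ H` by malnormality, giving `a⁻¹ (b⁻¹ s b) a`.
Nontrivial powers of `b` are single syllables of `B \ H`. Hence the image of a nontrivial reduced
word of `S * ℤ` is an alternating concatenation of such forms, which is again reduced and
therefore nontrivial in `G`.
-/

namespace Monoid.Coprod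

universe u v

variable (M : Type u) (N : Type v) [Group M] [Group N]

abbrev boolFamily : Bool → Type max u v
  | true => ULift.{v} M
  | false => ULift.{u} N

instance instGroupBoolFamily : ∀ b, Group (boolFamily M N b)
  | true => inferInstanceAs (Group (ULift M))
  | false => inferInstanceAs (Group (ULift N))

/-- `M ∗ N` as a `Bool`-indexed free product, where reduced words are available. -/
def toCoprodI : M ∗ N →* CoprodI (boolFamily M N) :=
  lift ((CoprodI.of (i := true)).comp MulEquiv.ulift.symm.toMonoidHom)
    ((CoprodI.of (i := false)).comp MulEquiv.ulift.symm.toMonoidHom)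

variable {M N}

def liftBoolFamily {P : Type*} [Monoid P] (f : M →* P) (g : N →* P) :
    ∀ b, boolFamily M N b →* P
  | true => f.comp MulEquiv.ulift.toMonoidHom
  | false => g.comp MulEquiv.ulift.toMonoidHom

@[simp]
theorem liftBoolFamily_true_apply {P : Type*} [Monoid P] (f : M →* P) (g : N →* P)
    (x : ULift M) : liftBoolFamily f g true x = f x.down :=
  rfl

@[simp]
theorem liftBoolFamily_false_apply {P : Type*} [Monoid P] (f : M →* P) (g : N →* P)
    (x : ULift N) : liftBoolFamily f g false x = g x.down :=
  rfl

theorem lift_eq_coprodI_lift_comp_toCoprodI {P : Type*} [Monoid P] (f : M →* P) (g : N →* P) :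
    lift f g = (CoprodI.lift (liftBoolFamily f g)).comp (toCoprodI M N) := by
  ext <;> simp [toCoprodI, liftBoolFamily]

variable (M N) in
theorem toCoprodI_injective : Function.Injective (toCoprodI M N) := by
  have h := lift_eq_coprodI_lift_comp_toCoprodI (inl : M →* M ∗ N) inr
  rw [lift_inl_inr] at h
  exact Function.LeftInverse.injective (g := CoprodI.lift (liftBoolFamily inl inr))
    fun x => (DFunLike.congr_fun h x).symm

end Monoid.Coprod

namespace Monoid.PushoutI

variable {ι : Type*} {H : Type*} {G : ι → Type*} [Group H] [∀ i, Group (G i)]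
  {φ : ∀ i, H →* G i}

variable (φ) in
def HasReducedForm (i j : ι) (x : PushoutI φ) : Prop :=
  ∃ w : CoprodI.NeWord G i j, Reduced φ w.toWord ∧ ofCoprodI w.prod = x

namespace HasReducedForm

theorem of_notMem_range {i : ι} {g : G i} (hg : g ∉ (φ i).range) :
    HasReducedForm φ i i (of i g) :=
  ⟨.singleton g fun h => hg (h ▸ one_mem _),
    by simpa [Reduced, CoprodI.NeWord.toWord] using hg, by simp⟩

theorem mul {i j k l : ι} {x y : PushoutI φ} (hx : HasReducedForm φ i j x) (hjk : j ≠ k)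
    (hy : HasReducedForm φ k l y) : HasReducedForm φ i l (x * y) := by
  obtain ⟨v, hv, rfl⟩ := hx
  obtain ⟨w, hw, rfl⟩ := hy
  refine ⟨.append v hjk w, fun g hg => ?_, by simp⟩
  rcases List.mem_append.mp hg with hg | hg
  exacts [hv g hg, hw g hg]

theorem conj {i j : ι} (hij : i ≠ j) {g : G i} (hg : g ∉ (φ i).range) {x : PushoutI φ}
    (hx : HasReducedForm φ j j x) : HasReducedForm φ i i ((of i g)⁻¹ * x * of i g) := by
  rw [← map_inv]
  exact ((of_notMem_range (by simpa using hg)).mul hij hx).mul hij.symm (of_notMem_range hg)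

theorem ne_one (hφ : ∀ i, Function.Injective (φ i)) {i j : ι} {x : PushoutI φ}
    (hx : HasReducedForm φ i j x) : x ≠ 1 := by
  obtain ⟨w, hw, rfl⟩ := hx
  intro h1
  exact w.toList_ne_nil (congrArg CoprodI.Word.toList
    (hw.eq_empty_of_mem_range hφ (h1 ▸ one_mem _)))

end HasReducedForm

theorem coprodI_lift_injective_of_hasReducedForm (hφ : ∀ i, Function.Injective (φ i))
    {κ : Type*} {K : κ → Type*} [∀ t, Group (K t)] {f : ∀ t, K t →* PushoutI φ} {c : κ → ι}
    (hc : Function.Injective c)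
    (hf : ∀ t (k : K t), k ≠ 1 → HasReducedForm φ (c t) (c t) (f t k)) :
    Function.Injective (CoprodI.lift f) := by
  classical
  have hword : ∀ {s t} (w : CoprodI.NeWord K s t),
      HasReducedForm φ (c s) (c t) (CoprodI.lift f w.prod) := by
    intro s t w
    induction w with
    | singleton k hk => simpa using hf _ k hk
    | append w₁ hne w₂ ih₁ ih₂ => simpa using ih₁.mul (hc.ne hne) ih₂
  refine (injective_iff_map_eq_one _).mpr fun x hx => ?_
  by_contra hx1
  have hne : CoprodI.Word.equiv x ≠ .empty := fun h =>
    hx1 (by rw [← CoprodI.Word.equiv.symm_apply_apply x, h]; exact CoprodI.Word.prod_empty)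
  obtain ⟨s, t, w, hw⟩ := CoprodI.NeWord.of_word _ hne
  have hprod : w.prod = x := by
    rw [CoprodI.NeWord.prod, hw]
    exact CoprodI.Word.equiv.symm_apply_apply x
  exact (hword w).ne_one hφ (hprod ▸ hx)

theorem HasReducedForm.conj_of_mul_of {i j : ι} (hij : i ≠ j) (hφ : Function.Injective (φ j))
    {a : G i} (ha : a ∉ (φ i).range) {b : G j} (hb : b ∉ (φ j).range)
    (hmal : ∀ h ∈ (φ j).range, h ≠ 1 → b⁻¹ * h * b ∉ (φ j).range) {s : G i} (hs : s ≠ 1) :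
    HasReducedForm φ i i ((of j b * of i a)⁻¹ * of i s * (of j b * of i a)) := by
  have hconj : (of (φ := φ) j b * of i a)⁻¹ * of i s * (of j b * of i a)
      = (of i a)⁻¹ * ((of j b)⁻¹ * of i s * of j b) * of i a := by group
  rw [hconj]
  refine .conj hij ha ?_
  by_cases hsH : s ∈ (φ i).range
  · obtain ⟨h, rfl⟩ := hsH
    have hh : φ j h ≠ 1 := fun h1 => hs (by rw [hφ (h1.trans (map_one _).symm), map_one])
    rw [of_apply_eq_base, ← of_apply_eq_base φ j, ← map_inv, ← map_mul, ← map_mul]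
    exact .of_notMem_range (hmal _ ⟨h, rfl⟩ hh)
  · exact .conj hij.symm hb (.of_notMem_range hsH)

end Monoid.PushoutI

/-- Let `G = A *_H B` be an amalgamated free product (formalized as the pushout of
injective maps `φ i : H →* G i`, with `A = G i`, `B = G j`, `i ≠ j`). Let `a ∈ A \ H` and
let `b ∈ B` satisfy `bᵏ ∉ H` for all nonzero integers `k`, with `H` malnormal in `B`.
Then for any subgroup `S ≤ A`, the subgroup of `G` generated by `(ba)⁻¹S(ba)` and `b` is
isomorphic to the free product `S * ⟨b⟩ ≅ S * ℤ`, i.e. the canonical homomorphism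
`S ∗ ℤ →* G` sending `s ↦ (ba)⁻¹s(ba)` and the generator of `ℤ` to `b` is injective. -/
theorem stmt_15 {ι : Type*} {H : Type*} {G : ι → Type*} [Group H] [∀ i, Group (G i)]
    (φ : ∀ i, H →* G i) (hφ : ∀ i, Function.Injective (φ i))
    (i j : ι) (hij : i ≠ j)
    (a : G i) (ha : a ∉ (φ i).range)
    (b : G j) (hb : ∀ k : ℤ, k ≠ 0 → b ^ k ∉ (φ j).range)
    (hmal : ∀ x : G j, x ∉ (φ j).range →
      ∀ h : G j, h ∈ (φ j).range → h ≠ 1 → x⁻¹ * h * x ∉ (φ j).range)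
    (S : Subgroup (G i)) :
    Function.Injective ⇑(Monoid.Coprod.lift
      ((MulAut.conj ((PushoutI.of (φ := φ) j b * PushoutI.of (φ := φ) i a)⁻¹)).toMonoidHom.comp
        ((PushoutI.of (φ := φ) i).comp S.subtype))
      (zpowersHom (PushoutI φ) (PushoutI.of (φ := φ) j b))) := by
  have hbH : b ∉ (φ j).range := by simpa using hb 1 one_ne_zero
  rw [Coprod.lift_eq_coprodI_lift_comp_toCoprodI]
  refine (PushoutI.coprodI_lift_injective_of_hasReducedForm hφ
    (c := fun t => cond t i j) ?_ ?_).comp (Coprod.toCoprodI_injective _ _)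
  · rintro (_ | _) (_ | _) h <;> simp_all [eq_comm]
  · rintro (_ | _) ⟨k⟩ hk
    · have hk0 : Multiplicative.toAdd k ≠ 0 := fun h => hk (congrArg ULift.up h)
      rw [Coprod.liftBoolFamily_false_apply]
      simpa using PushoutI.HasReducedForm.of_notMem_range (hb _ hk0)
    · have hs : (k : G i) ≠ 1 := fun h => hk (congrArg ULift.up (Subtype.ext h))
      rw [Coprod.liftBoolFamily_true_apply]
      simpa [mul_assoc] using
        PushoutI.HasReducedForm.conj_of_mul_of hij (hφ j) ha hbH (hmal b hbH) hs
end
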